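/- Let n ∈ ℝ² be a unit vector, a ∈ ℝ², and let G⁺, G⁻ be 2×2 real matrices with G⁺ − G⁻ = a nᵀ. Let μ⁺, μ⁻, λ⁺, λ⁻, P⁺, P⁻ be real numbers with μ^± ≥ μ̲ > 0 and λ^± ≥ 0, set D^± = (G^± + (G^±)ᵀ)/2 and Π^± = 2 μ^± D^± + (λ^± tr G^± − P^±) I₂, and assume (Π⁺ − Π⁻) n = 0. If J ≥ 0 is such that |μ⁺ − μ⁻| ≤ J, |λ⁺ − λ⁻| ≤ J and |P⁺ − P⁻| ≤ J, then there is a constant C depending only on μ̲ (and not on the matrices, the vectors, or J) such that |a| ≤ C · J · (1 + ‖G⁺‖ + ‖G⁻‖), where ‖·‖ denotes the operator norm. -/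

import Mathlib

open Matrix

/-- The Euclidean norm of a vector in the plane. -/
noncomputable def eNorm2 (x : Fin 2 → ℝ) : ℝ := Real.sqrt (x 0 ^ 2 + x 1 ^ 2)

/-- The operator norm (with respect to the Euclidean norm) of a `2×2` real matrix. -/
noncomputable def opNorm2 (M : Matrix (Fin 2) (Fin 2) ℝ) : ℝ :=
  ‖Matrix.toEuclideanCLM (𝕜 := ℝ) M‖

/-!
Write `G⁺ = G⁻ + a nᵀ`. The stress `Π(μ, λ, P; G)` is affine in `G` and in the coefficients, so
`Π⁺ - Π⁻ = Π(μ⁺, λ⁺, 0; a nᵀ) + Π(μ⁺ - μ⁻, λ⁺ - λ⁻, P⁺ - P⁻; G⁻)`, and for a unit normal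
`(a nᵀ + n aᵀ) n = a + (a·n) n`. The balance thus reads `μ⁺ a + (μ⁺ + λ⁺)(a·n) n + q = 0`, where
`‖q‖ ≤ J (4‖G⁻‖ + 1)`. Pairing with `n` gives `(2μ⁺ + λ⁺)(a·n) = -q·n`, so `(μ⁺ + λ⁺)|a·n| ≤ ‖q‖`
and then `μ⁺ |a| ≤ 2‖q‖`; hence `C = 8 / μ̲`.
-/

open scoped RealInnerProductSpace

theorem norm_le_of_smul_add_inner_smul_add_eq_zero {E : Type*} [NormedAddCommGroup E]
    [InnerProductSpace ℝ E] {μ lam : ℝ} {a n q : E} (hn : ‖n‖ = 1) (hμ : 0 < μ) (hlam : 0 ≤ lam)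
    (h : μ • a + ((μ + lam) * ⟪a, n⟫) • n + q = 0) : μ * ‖a‖ ≤ 2 * ‖q‖ := by
  have hnormal : (2 * μ + lam) * ⟪a, n⟫ = -⟪q, n⟫ := by
    have := congrArg (⟪·, n⟫) h
    simp only [inner_add_left, inner_smul_left, real_inner_self_eq_norm_sq, hn, inner_zero_left,
      RCLike.conj_to_real] at this
    linear_combination this
  have hs : (μ + lam) * |⟪a, n⟫| ≤ ‖q‖ := calc
    (μ + lam) * |⟪a, n⟫| ≤ (2 * μ + lam) * |⟪a, n⟫| := by gcongr; linarith
    _ = |⟪q, n⟫| := by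
        rw [← abs_of_pos (by linarith : 0 < 2 * μ + lam), ← abs_mul, hnormal, abs_neg]
    _ ≤ ‖q‖ := by simpa [hn] using abs_real_inner_le_norm q n
  have hμa : μ • a = -(((μ + lam) * ⟪a, n⟫) • n + q) :=
    eq_neg_of_add_eq_zero_left (by rwa [← add_assoc])
  calc μ * ‖a‖ = ‖μ • a‖ := by rw [norm_smul, Real.norm_eq_abs, abs_of_pos hμ]
    _ = ‖((μ + lam) * ⟪a, n⟫) • n + q‖ := by rw [hμa, norm_neg]
    _ ≤ (μ + lam) * |⟪a, n⟫| + ‖q‖ := by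
        grw [norm_add_le, norm_smul, hn, Real.norm_eq_abs, abs_mul,
          abs_of_nonneg (by linarith : 0 ≤ μ + lam), mul_one]
    _ ≤ 2 * ‖q‖ := by linarith

variable {ι : Type*} [Fintype ι]

theorem norm_toLp_eq_one {n : ι → ℝ} (hn : n ⬝ᵥ n = 1) : ‖WithLp.toLp 2 n‖ = 1 := by
  rw [norm_eq_sqrt_real_inner, EuclideanSpace.inner_toLp_toLp, star_trivial, hn, Real.sqrt_one]

variable [DecidableEq ι]

noncomputable def viscousStress (μ lam P : ℝ) (G : Matrix ι ι ℝ) : Matrix ι ι ℝ :=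
  (2 * μ) • ((2⁻¹ : ℝ) • (G + Gᵀ)) + (lam * G.trace - P) • 1

theorem viscousStress_sub_viscousStress (μ₁ μ₂ l₁ l₂ P₁ P₂ : ℝ) (G₁ G₂ : Matrix ι ι ℝ) :
    viscousStress μ₁ l₁ P₁ G₁ - viscousStress μ₂ l₂ P₂ G₂ =
      viscousStress μ₁ l₁ 0 (G₁ - G₂) + viscousStress (μ₁ - μ₂) (l₁ - l₂) (P₁ - P₂) G₂ := by
  simp only [viscousStress, trace_sub, transpose_sub]
  module

theorem viscousStress_vecMulVec_mulVec (μ lam : ℝ) {a n : ι → ℝ} (hn : n ⬝ᵥ n = 1) :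
    viscousStress μ lam 0 (vecMulVec a n) *ᵥ n = μ • a + ((μ + lam) * (a ⬝ᵥ n)) • n := by
  simp only [viscousStress, trace_vecMulVec, transpose_vecMulVec, add_mulVec, smul_mulVec,
    vecMulVec_mulVec, one_mulVec, hn, op_smul_eq_smul, one_smul]
  module

open scoped Matrix.Norms.L2Operator

theorem abs_apply_le_l2_opNorm (A : Matrix ι ι ℝ) (i j : ι) : |A i j| ≤ ‖A‖ := by
  have hentry : A i j = ⟪EuclideanSpace.single i 1, toEuclideanCLM (𝕜 := ℝ) A
      (EuclideanSpace.single j 1)⟫ := by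
    simp [inner_toEuclideanCLM, mulVec_single]
  calc |A i j| ≤ ‖EuclideanSpace.single i (1 : ℝ)‖ *
        ‖toEuclideanCLM (𝕜 := ℝ) A (EuclideanSpace.single j 1)‖ :=
        hentry ▸ abs_real_inner_le_norm _ _
    _ ≤ ‖A‖ := by
        rw [cstar_norm_def]
        simpa using (toEuclideanCLM (𝕜 := ℝ) A).le_opNorm (EuclideanSpace.single j 1)

theorem abs_trace_le_card_mul_l2_opNorm (A : Matrix ι ι ℝ) :
    |A.trace| ≤ Fintype.card ι * ‖A‖ := calc
  |A.trace| ≤ ∑ i, |A i i| := Finset.abs_sum_le_sum_abs _ _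
  _ ≤ ∑ _i : ι, ‖A‖ := Finset.sum_le_sum fun i _ ↦ abs_apply_le_l2_opNorm A i i
  _ = Fintype.card ι * ‖A‖ := by simp

theorem l2_opNorm_symmPart_le (G : Matrix ι ι ℝ) : ‖(2⁻¹ : ℝ) • (G + Gᵀ)‖ ≤ ‖G‖ := by
  rw [norm_smul, ← conjTranspose_eq_transpose_of_trivial]
  grw [norm_add_le, l2_opNorm_conjTranspose]
  norm_num
  linarith

theorem l2_opNorm_one_le : ‖(1 : Matrix ι ι ℝ)‖ ≤ 1 := by
  rw [cstar_norm_def, map_one]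
  exact ContinuousLinearMap.norm_id_le

theorem norm_viscousStress_le (μ lam P : ℝ) (G : Matrix ι ι ℝ) :
    ‖viscousStress μ lam P G‖ ≤ (2 * |μ| + Fintype.card ι * |lam|) * ‖G‖ + |P| := calc
  ‖viscousStress μ lam P G‖ ≤ |2 * μ| * ‖G‖ + |lam * G.trace - P| * 1 := by
    grw [viscousStress, norm_add_le, norm_smul (2 * μ), norm_smul (lam * G.trace - P),
      l2_opNorm_symmPart_le, l2_opNorm_one_le, Real.norm_eq_abs, Real.norm_eq_abs]
  _ ≤ (2 * |μ| + Fintype.card ι * |lam|) * ‖G‖ + |P| := by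
    grw [mul_one, abs_sub, abs_mul, abs_mul, abs_trace_le_card_mul_l2_opNorm, abs_two]
    linarith

theorem mul_norm_le_of_viscousStress_balance {n a : ι → ℝ} {Gp Gm : Matrix ι ι ℝ}
    {μp μm lamp lamm Pp Pm : ℝ} (hn : n ⬝ᵥ n = 1) (hG : Gp - Gm = vecMulVec a n) (hμ : 0 < μp)
    (hlam : 0 ≤ lamp)
    (hbal : (viscousStress μp lamp Pp Gp - viscousStress μm lamm Pm Gm) *ᵥ n = 0) :
    μp * ‖WithLp.toLp 2 a‖ ≤ 2 * ‖viscousStress (μp - μm) (lamp - lamm) (Pp - Pm) Gm‖ := by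
  set S := viscousStress (μp - μm) (lamp - lamm) (Pp - Pm) Gm
  rw [viscousStress_sub_viscousStress, hG, add_mulVec, viscousStress_vecMulVec_mulVec _ _ hn]
    at hbal
  have hbal' : μp • WithLp.toLp 2 a + ((μp + lamp) * ⟪WithLp.toLp 2 a, WithLp.toLp 2 n⟫) •
      WithLp.toLp 2 n + toEuclideanCLM (𝕜 := ℝ) S (WithLp.toLp 2 n) = 0 := by
    rw [EuclideanSpace.inner_toLp_toLp, star_trivial, dotProduct_comm, toEuclideanCLM_toLp,
      ← WithLp.toLp_smul, ← WithLp.toLp_smul, ← WithLp.toLp_add, ← WithLp.toLp_add, hbal,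
      WithLp.toLp_zero]
  calc μp * ‖WithLp.toLp 2 a‖ ≤ 2 * ‖toEuclideanCLM (𝕜 := ℝ) S (WithLp.toLp 2 n)‖ :=
        norm_le_of_smul_add_inner_smul_add_eq_zero (norm_toLp_eq_one hn) hμ hlam hbal'
    _ ≤ 2 * ‖S‖ := by
        grw [(toEuclideanCLM (𝕜 := ℝ) S).le_opNorm, norm_toLp_eq_one hn, mul_one]
        rfl

theorem eNorm2_eq_norm (x : Fin 2 → ℝ) : eNorm2 x = ‖WithLp.toLp 2 x‖ := by
  simp [eNorm2, EuclideanSpace.norm_eq, Fin.sum_univ_two]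

theorem opNorm2_eq_norm (M : Matrix (Fin 2) (Fin 2) ℝ) : opNorm2 M = ‖M‖ := rfl

/-- The jump `a nᵀ` of the velocity gradient across the interface is controlled by the
jumps of the viscosities and the pressure, times `1 +` the size of the velocity gradient. -/
theorem gradient_jump_controlled_by_coefficient_jumps
    (μlo : ℝ) (hμlo : 0 < μlo) :
    ∃ C : ℝ, 0 < C ∧
      ∀ (n a : Fin 2 → ℝ) (Gp Gm Dp Dm Pip Pim : Matrix (Fin 2) (Fin 2) ℝ)
        (μp μm lamp lamm Pp Pm J : ℝ),
        n ⬝ᵥ n = 1 →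
        Gp - Gm = vecMulVec a n →
        μlo ≤ μp → μlo ≤ μm → 0 ≤ lamp → 0 ≤ lamm →
        Dp = (2⁻¹ : ℝ) • (Gp + Gpᵀ) →
        Dm = (2⁻¹ : ℝ) • (Gm + Gmᵀ) →
        Pip = (2 * μp) • Dp + (lamp * Gp.trace - Pp) • (1 : Matrix (Fin 2) (Fin 2) ℝ) →
        Pim = (2 * μm) • Dm + (lamm * Gm.trace - Pm) • (1 : Matrix (Fin 2) (Fin 2) ℝ) →
        (Pip - Pim).mulVec n = 0 →
        0 ≤ J → |μp - μm| ≤ J → |lamp - lamm| ≤ J → |Pp - Pm| ≤ J →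
        eNorm2 a ≤ C * J * (1 + opNorm2 Gp + opNorm2 Gm) := by
  refine ⟨8 / μlo, by positivity, ?_⟩
  intro n a Gp Gm Dp Dm Pip Pim μp μm lamp lamm Pp Pm J hn hG hμp _ hlamp _ hDp hDm hPip hPim
    hbal hJ hJμ hJlam hJP
  subst hDp hDm hPip hPim
  have hjump := mul_norm_le_of_viscousStress_balance hn hG (hμlo.trans_le hμp) hlamp hbal
  have hstress := norm_viscousStress_le (μp - μm) (lamp - lamm) (Pp - Pm) Gm
  rw [Fintype.card_fin, Nat.cast_ofNat] at hstress
  have hGp := norm_nonneg Gp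
  have hGm := norm_nonneg Gm
  have hbound : μlo * eNorm2 a ≤ 8 * J * (1 + opNorm2 Gp + opNorm2 Gm) := calc
    μlo * eNorm2 a ≤ μp * ‖WithLp.toLp 2 a‖ := by rw [eNorm2_eq_norm]; gcongr
    _ ≤ 2 * ((2 * J + 2 * J) * ‖Gm‖ + J) := by grw [hjump, hstress, hJμ, hJlam, hJP]
    _ ≤ 8 * J * (1 + opNorm2 Gp + opNorm2 Gm) := by
        rw [opNorm2_eq_norm, opNorm2_eq_norm]; nlinarith
  rw [div_mul_eq_mul_div, div_mul_eq_mul_div, le_div_iff₀ hμlo]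
  linarith
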